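/- Assume: (1) lim_{N→∞} σ_N²(𝕋) = σ² ∈ (0,∞); and (3) for all M,N ∈ ℕ there exist pairwise disjoint subsets 𝔹_1^(N,M),…,𝔹_M^(N,M) ⊆ 𝕋 with lim_{M→∞} lim_{N→∞} Σ_{i=1}^M σ_N²(𝔹_i^(N,M)) = σ² and lim_{M→∞} limsup_{N→∞} max_{1≤i≤M} σ_N²(𝔹_i^(N,M)) = 0. Define the influence of t ∈ 𝕋 on X_N by Inf_t[X_N] := Σ_{A⊂𝕋, 0<|A|<∞, A∋t} q_N(A)². Then lim_{N→∞} sup_{t∈𝕋} Inf_t[X_N] = 0. -/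

import Mathlib

open MeasureTheory ProbabilityTheory Filter
open scoped Classical

set_option maxHeartbeats 1000000

noncomputable section

/-- `σ_N²(𝔹)`: the contribution to the second moment of the polynomial chaos with
coefficients `c` coming from the finite (nonempty) subsets of `B`. -/
def chaosVar {T : Type*} (c : Finset T → ℝ) (B : Set T) : ℝ :=
  ∑' A : Finset T, if (A : Set T) ⊆ B then c A ^ 2 else 0

/-- `X` is the `L²`-convergent sum of the polynomial chaos with coefficients `c`
in the independent random variables `η`. -/
def IsL2ChaosSum {T : Type*} {Ω : Type*} [MeasurableSpace Ω] (μ : Measure Ω)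
    (c : Finset T → ℝ) (η : T → Ω → ℝ) (X : Ω → ℝ) : Prop :=
  Filter.Tendsto
    (fun s : Finset (Finset T) =>
      eLpNorm (fun a => X a - ∑ A ∈ s, c A * ∏ t ∈ A, η t a) 2 μ)
    Filter.atTop (nhds 0)

section Aux
variable {T : Type*}

lemma sum_ite_subset_le {M : ℕ} (f : Finset T → ℝ) (hf : ∀ A, 0 ≤ f A) (hf0 : f ∅ = 0)
    (Bv : Fin M → Set T) (hd : Pairwise (Function.onFun Disjoint Bv)) (A : Finset T) :
    ∑ i : Fin M, (if (A : Set T) ⊆ Bv i then f A else 0) ≤ f A := by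
  rcases A.eq_empty_or_nonempty with rfl | ⟨t0, ht0⟩
  · simp [hf0]
  by_cases h : ∃ i, (A : Set T) ⊆ Bv i
  · obtain ⟨i0, hi0⟩ := h
    have : ∑ i : Fin M, (if (A : Set T) ⊆ Bv i then f A else 0)
        = if (A : Set T) ⊆ Bv i0 then f A else 0 := by
      apply Finset.sum_eq_single_of_mem i0 (Finset.mem_univ i0)
      intro b _ hb
      rw [if_neg]
      intro hsub
      exact (hd hb).ne_of_mem (hsub ht0) (hi0 ht0) rfl
    rw [this, if_pos hi0]
  · push_neg at h
    simp only [h, if_false, Finset.sum_const_zero]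
    exact hf A

lemma key_ineq {M : ℕ} (f : Finset T → ℝ) (hf : ∀ A, 0 ≤ f A) (hf0 : f ∅ = 0)
    (Bv : Fin M → Set T) (hd : Pairwise (Function.onFun Disjoint Bv))
    (t : T) (j : Fin M) (htj : t ∈ Bv j) (A : Finset T) :
    (if t ∈ A then f A else 0) + ∑ i : Fin M, (if (A : Set T) ⊆ Bv i then f A else 0)
      ≤ (if (A : Set T) ⊆ Bv j then f A else 0) + f A := by
  by_cases htA : t ∈ A
  · rw [if_pos htA, add_comm]
    apply add_le_add_left
    have : ∑ i : Fin M, (if (A : Set T) ⊆ Bv i then f A else 0)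
        = if (A : Set T) ⊆ Bv j then f A else 0 := by
      apply Finset.sum_eq_single_of_mem j (Finset.mem_univ j)
      intro b _ hb
      rw [if_neg]
      intro hsub
      exact (hd hb).ne_of_mem (hsub htA) htj rfl
    rw [this]
  · rw [if_neg htA, zero_add]
    have h1 := sum_ite_subset_le f hf hf0 Bv hd A
    have h2 : (0:ℝ) ≤ if (A : Set T) ⊆ Bv j then f A else 0 := by
      split_ifs
      exacts [hf A, le_rfl]
    linarith

lemma key_ineq2 {M : ℕ} (f : Finset T → ℝ) (hf : ∀ A, 0 ≤ f A) (hf0 : f ∅ = 0)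
    (Bv : Fin M → Set T) (hd : Pairwise (Function.onFun Disjoint Bv))
    (t : T) (htj : ∀ j, t ∉ Bv j) (A : Finset T) :
    (if t ∈ A then f A else 0) + ∑ i : Fin M, (if (A : Set T) ⊆ Bv i then f A else 0)
      ≤ f A := by
  by_cases htA : t ∈ A
  · rw [if_pos htA]
    have : ∑ i : Fin M, (if (A : Set T) ⊆ Bv i then f A else 0) = 0 := by
      apply Finset.sum_eq_zero
      intro i _
      rw [if_neg]
      exact fun hsub => htj i (hsub htA)
    rw [this, add_zero]
  · rw [if_neg htA, zero_add]
    exact sum_ite_subset_le f hf hf0 Bv hd A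

lemma summable_ite (f : Finset T → ℝ) (hf : ∀ A, 0 ≤ f A) (hs : Summable f)
    (P : Finset T → Prop) [DecidablePred P] :
    Summable (fun A => if P A then f A else 0) := by
  apply Summable.of_nonneg_of_le (fun A => ?_) (fun A => ?_) hs
  · split_ifs; exacts [hf A, le_rfl]
  · split_ifs; exacts [le_rfl, hf A]

lemma inf_le_bound {M : ℕ} (f : Finset T → ℝ) (hf : ∀ A, 0 ≤ f A) (hf0 : f ∅ = 0)
    (hs : Summable f)
    (Bv : Fin M → Set T) (hd : Pairwise (Function.onFun Disjoint Bv)) (t : T) :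
    (∑' A : Finset T, if t ∈ A then f A else 0)
      ≤ (⨆ i : Fin M, ∑' A : Finset T, if (A : Set T) ⊆ Bv i then f A else 0)
        + ((∑' A, f A)
            - ∑ i : Fin M, ∑' A : Finset T, if (A : Set T) ⊆ Bv i then f A else 0) := by
  have sInf : Summable (fun A : Finset T => if t ∈ A then f A else 0) := by
    apply Summable.of_nonneg_of_le (fun A => ?_) (fun A => ?_) hs
    · split_ifs; exacts [hf A, le_rfl]
    · split_ifs; exacts [le_rfl, hf A]
  have sB : ∀ i : Fin M, Summable
      (fun A : Finset T => if (A : Set T) ⊆ Bv i then f A else 0) := by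
    intro i
    apply Summable.of_nonneg_of_le (fun A => ?_) (fun A => ?_) hs
    · split_ifs; exacts [hf A, le_rfl]
    · split_ifs; exacts [le_rfl, hf A]
  have sSum : Summable (fun A : Finset T =>
      ∑ i : Fin M, if (A : Set T) ⊆ Bv i then f A else 0) :=
    summable_sum (fun i _ => sB i)
  have sAdd : Summable (fun A : Finset T => (if t ∈ A then f A else 0)
      + ∑ i : Fin M, if (A : Set T) ⊆ Bv i then f A else 0) := sInf.add sSum
  have hbdd : BddAbove (Set.range fun i : Fin M =>
      ∑' A : Finset T, if (A : Set T) ⊆ Bv i then f A else 0) :=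
    Set.Finite.bddAbove (Set.finite_range _)
  by_cases h : ∃ j, t ∈ Bv j
  · obtain ⟨j, hj⟩ := h
    have key : (∑' A : Finset T, ((if t ∈ A then f A else 0)
          + ∑ i : Fin M, if (A : Set T) ⊆ Bv i then f A else 0))
        ≤ ∑' A : Finset T, ((if (A : Set T) ⊆ Bv j then f A else 0) + f A) := by
      exact Summable.tsum_le_tsum (key_ineq f hf hf0 Bv hd t j hj) sAdd ((sB j).add hs)
    rw [Summable.tsum_add sInf sSum, Summable.tsum_add (sB j) hs, Summable.tsum_finsetSum (fun i _ => sB i)] at key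
    have hsup := le_ciSup hbdd j
    linarith
  · push_neg at h
    have key : (∑' A : Finset T, ((if t ∈ A then f A else 0)
          + ∑ i : Fin M, if (A : Set T) ⊆ Bv i then f A else 0))
        ≤ ∑' A, f A := by
      exact Summable.tsum_le_tsum (key_ineq2 f hf hf0 Bv hd t h) sAdd hs
    rw [Summable.tsum_add sInf sSum, Summable.tsum_finsetSum (fun i _ => sB i)] at key
    have hsup : (0:ℝ) ≤ ⨆ i : Fin M, ∑' A : Finset T,
        if (A : Set T) ⊆ Bv i then f A else 0 :=
      Real.iSup_nonneg (fun i => tsum_nonneg (fun A => by split_ifs; exacts [hf A, le_rfl]))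
    linarith

end Aux

/-- **Vanishing of the maximal influence**: under the limiting second moment assumption
(1) and the spectral localization assumption (3), the influences
`Inf_t[X_N] = ∑_{A ∋ t} q_N(A)²` satisfy `lim_{N→∞} sup_{t∈𝕋} Inf_t[X_N] = 0`. -/
theorem influences_tendsto_zero
    {T : Type*} [Countable T]
    (q : ℕ → Finset T → ℝ)
    (hq0 : ∀ N, q N ∅ = 0)
    (hqsum : ∀ N, Summable (fun A : Finset T => (q N A) ^ 2))
    (σ2 : ℝ) (hσ2 : 0 < σ2)
    (hyp1 : Filter.Tendsto (fun N => chaosVar (q N) Set.univ) Filter.atTop (nhds σ2))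
    (B : ℕ → (M : ℕ) → Fin M → Set T)
    (hdisj : ∀ N M, Pairwise (Function.onFun Disjoint (B N M)))
    (S : ℕ → ℝ)
    (hyp3a : ∀ M : ℕ, Filter.Tendsto
      (fun N => ∑ i : Fin M, chaosVar (q N) (B N M i)) Filter.atTop (nhds (S M)))
    (hyp3b : Filter.Tendsto S Filter.atTop (nhds σ2))
    (hyp3c : Filter.Tendsto
      (fun M : ℕ => Filter.limsup
        (fun N => ⨆ i : Fin M, chaosVar (q N) (B N M i)) Filter.atTop)
      Filter.atTop (nhds 0)) :
    ∀ ε : ℝ, 0 < ε → ∀ᶠ N in Filter.atTop, ∀ t : T,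
      (∑' A : Finset T, if t ∈ A then (q N A) ^ 2 else 0) ≤ ε := by
  intro ε hε
  have h4 : 0 < ε / 4 := by linarith
  have hf : ∀ N (A : Finset T), 0 ≤ (q N A) ^ 2 := fun N A => sq_nonneg _
  have hf0 : ∀ N, (q N ∅) ^ 2 = 0 := fun N => by rw [hq0]; ring
  -- chaosVar over univ is the full sum
  have hcu : ∀ N, chaosVar (q N) Set.univ = ∑' A : Finset T, (q N A) ^ 2 := by
    intro N
    unfold chaosVar
    exact tsum_congr fun A => if_pos (Set.subset_univ _)
  -- chaosVar of any set is at most the full sum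
  have hcv_le : ∀ N (Bs : Set T), chaosVar (q N) Bs ≤ ∑' A : Finset T, (q N A) ^ 2 := by
    intro N Bs
    have hsumB : Summable (fun A : Finset T =>
        if (A : Set T) ⊆ Bs then (q N A) ^ 2 else 0) := by
      apply Summable.of_nonneg_of_le (fun A => ?_) (fun A => ?_) (hqsum N)
      · split_ifs; exacts [hf N A, le_rfl]
      · split_ifs; exacts [le_rfl, hf N A]
    exact Summable.tsum_le_tsum (fun A => by split_ifs; exacts [le_rfl, hf N A]) hsumB (hqsum N)
  -- pick M with good properties
  obtain ⟨M, hM1, hM2⟩ : ∃ M : ℕ,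
      Filter.limsup (fun N => ⨆ i : Fin M, chaosVar (q N) (B N M i)) Filter.atTop < ε / 4
      ∧ |S M - σ2| < ε / 4 := by
    have e1 : ∀ᶠ M in Filter.atTop, Filter.limsup
        (fun N => ⨆ i : Fin M, chaosVar (q N) (B N M i)) Filter.atTop < ε / 4 :=
      hyp3c.eventually_lt_const h4
    have e2 : ∀ᶠ M in Filter.atTop, |S M - σ2| < ε / 4 :=
      hyp3b.eventually (eventually_abs_sub_lt σ2 h4)
    exact (e1.and e2).exists
  -- boundedness for passing from limsup to eventually
  have hbd : Filter.IsBoundedUnder (· ≤ ·) Filter.atTop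
      (fun N => ⨆ i : Fin M, chaosVar (q N) (B N M i)) := by
    refine ⟨σ2 + 1, ?_⟩
    rw [Filter.eventually_map]
    filter_upwards [hyp1.eventually (eventually_abs_sub_lt σ2 (by linarith : (0:ℝ) < 1))]
      with N hN
    have h1 : chaosVar (q N) Set.univ ≤ σ2 + 1 := by
      have := abs_lt.mp hN; linarith
    refine Real.iSup_le (fun i => ?_) (by linarith)
    calc chaosVar (q N) (B N M i) ≤ ∑' A : Finset T, (q N A) ^ 2 := hcv_le N _
      _ = chaosVar (q N) Set.univ := (hcu N).symm
      _ ≤ σ2 + 1 := h1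
  have ev_sup : ∀ᶠ N in Filter.atTop,
      (⨆ i : Fin M, chaosVar (q N) (B N M i)) < ε / 4 :=
    Filter.eventually_lt_of_limsup_lt hM1 hbd
  have ev_univ : ∀ᶠ N in Filter.atTop, |chaosVar (q N) Set.univ - σ2| < ε / 4 :=
    hyp1.eventually (eventually_abs_sub_lt σ2 h4)
  have ev_sum : ∀ᶠ N in Filter.atTop,
      |(∑ i : Fin M, chaosVar (q N) (B N M i)) - S M| < ε / 4 :=
    (hyp3a M).eventually (eventually_abs_sub_lt (S M) h4)
  filter_upwards [ev_sup, ev_univ, ev_sum] with N hsup huniv hsum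
  intro t
  have key := inf_le_bound (fun A => (q N A) ^ 2) (hf N) (hf0 N) (hqsum N)
    (B N M) (hdisj N M) t
  have hcv : ∀ i : Fin M, chaosVar (q N) (B N M i)
      = ∑' A : Finset T, if (A : Set T) ⊆ B N M i then (q N A) ^ 2 else 0 :=
    fun i => rfl
  have habs1 := abs_lt.mp huniv
  have habs2 := abs_lt.mp hsum
  have habs3 := abs_lt.mp hM2
  have hsum_eq : (∑ i : Fin M, ∑' A : Finset T,
      if (A : Set T) ⊆ B N M i then (q N A) ^ 2 else 0)
      = ∑ i : Fin M, chaosVar (q N) (B N M i) :=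
    Finset.sum_congr rfl (fun i _ => (hcv i).symm)
  have hsup_eq : (⨆ i : Fin M, ∑' A : Finset T,
      if (A : Set T) ⊆ B N M i then (q N A) ^ 2 else 0)
      = ⨆ i : Fin M, chaosVar (q N) (B N M i) :=
    iSup_congr (fun i => (hcv i).symm)
  rw [hsum_eq, hsup_eq] at key
  rw [hcu N] at habs1
  linarith [key, hsup]

end
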